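/- The map f : [0,1] → [0,1], f(x) = 1 − x, does not have mean ergodic shadowing. -/

import Mathlib

open Filter Metric

noncomputable def cnt (E : Set ℕ) (n : ℕ) : ℝ :=
  ∑ i ∈ Finset.range n, Set.indicator E (fun _ => (1 : ℝ)) i

def DensityZero (E : Set ℕ) : Prop :=
  Filter.Tendsto (fun n : ℕ => cnt E n / n) Filter.atTop (nhds 0)

noncomputable def upperDensity (E : Set ℕ) : ℝ :=
  Filter.limsup (fun n : ℕ => cnt E n / n) Filter.atTop

noncomputable def lowerDensity (E : Set ℕ) : ℝ :=
  Filter.liminf (fun n : ℕ => cnt E n / n) Filter.atTop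

variable {X : Type*}

def ErgodicPseudoOrbit [MetricSpace X] (f : X → X) (δ : ℝ) (ξ : ℕ → X) : Prop :=
  DensityZero {i | δ ≤ dist (f (ξ i)) (ξ (i + 1))}

def AvgShadows [MetricSpace X] (f : X → X) (ε : ℝ) (p : X) (ξ : ℕ → X) : Prop :=
  Filter.limsup (fun n : ℕ => (∑ i ∈ Finset.range n, dist (f^[i] p) (ξ i)) / n) Filter.atTop < ε

def MeanErgodicShadowingAvg [MetricSpace X] (f : X → X) : Prop :=
  ∀ ε > 0, ∃ δ > 0, ∀ ξ : ℕ → X, ErgodicPseudoOrbit f δ ξ → ∃ p : X, AvgShadows f ε p ξ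

def MeanErgodicShadowingDens [MetricSpace X] (f : X → X) : Prop :=
  ∀ ε > 0, ∃ δ > 0, ∀ ξ : ℕ → X, ErgodicPseudoOrbit f δ ξ →
    ∃ p : X, upperDensity {i | ε ≤ dist (f^[i] p) (ξ i)} < ε

def Shadowing [MetricSpace X] (f : X → X) : Prop :=
  ∀ ε > 0, ∃ δ > 0, ∀ ξ : ℕ → X, (∀ i, dist (f (ξ i)) (ξ (i + 1)) < δ) →
    ∃ p : X, ∀ i, dist (f^[i] p) (ξ i) < ε


/-! An isometry `f` keeps `dist (f^[i] p) (f^[i] x) = dist p x` along orbits. Follow the orbit of `x`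
on the dyadic blocks `[2 ^ m - 1, 2 ^ (m + 1) - 1)` with `m` even and that of `y` on the others: this
is an exact orbit except at the `O(log n)` block boundaries, so a `δ`-ergodic pseudo orbit for every
`δ > 0`. Each block fills half of the time elapsed at its end, so the mean distance from the orbit of
any `p` is at least `dist p x / 2` and at least `dist p y / 2` infinitely often, hence has
`limsup ≥ dist x y / 4`. The map `t ↦ 1 - t` is an isometry of `[0, 1]`. -/

open Topology Finset

lemma cnt_nonneg (E : Set ℕ) (n : ℕ) : 0 ≤ cnt E n :=
  sum_nonneg fun i _ => Set.indicator_nonneg (fun _ _ => zero_le_one) i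

lemma cnt_mono {E F : Set ℕ} (h : E ⊆ F) (n : ℕ) : cnt E n ≤ cnt F n :=
  sum_le_sum fun i _ => Set.indicator_le_indicator_of_subset h (fun _ => zero_le_one) i

lemma cnt_succ (E : Set ℕ) (n : ℕ) :
    cnt E (n + 1) = cnt E n + E.indicator (fun _ => (1 : ℝ)) n :=
  sum_range_succ _ n

lemma DensityZero.of_cnt_le {E : Set ℕ} {g : ℕ → ℝ} (h : ∀ n, cnt E n ≤ g n)
    (hg : Tendsto (fun n : ℕ => g n / n) atTop (𝓝 0)) : DensityZero E :=
  tendsto_of_tendsto_of_tendsto_of_le_of_le tendsto_const_nhds hg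
    (fun n => div_nonneg (cnt_nonneg E n) n.cast_nonneg)
    (fun n => div_le_div_of_nonneg_right (h n) n.cast_nonneg)

lemma DensityZero.subset {E F : Set ℕ} (hF : DensityZero F) (h : E ⊆ F) : DensityZero E :=
  .of_cnt_le (cnt_mono h) hF

lemma cnt_setOf_log_two_ne_le (n : ℕ) :
    cnt {i | Nat.log 2 (i + 2) ≠ Nat.log 2 (i + 1)} n ≤ Nat.log 2 (n + 1) := by
  induction n with
  | zero => simp [cnt]
  | succ n ih =>
    rw [cnt_succ]
    have hmono : Nat.log 2 (n + 1) ≤ Nat.log 2 (n + 2) := Nat.log_mono_right (by omega)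
    by_cases hn : Nat.log 2 (n + 2) ≠ Nat.log 2 (n + 1)
    · rw [Set.indicator_of_mem hn]
      have : Nat.log 2 (n + 1) + 1 ≤ Nat.log 2 (n + 2) := by omega
      exact_mod_cast (add_le_add_left ih 1).trans (by exact_mod_cast this)
    · rw [Set.indicator_of_notMem hn, add_zero]
      exact ih.trans (by exact_mod_cast hmono)

lemma tendsto_natLog_two_succ_div :
    Tendsto (fun n : ℕ => (Nat.log 2 (n + 1) : ℝ) / n) atTop (𝓝 0) := by
  have hlog : Tendsto (fun n : ℕ => Real.logb 2 (n + 1) / n) atTop (𝓝 0) := by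
    have := ((Real.tendsto_pow_log_div_mul_add_atTop 1 (-1) 1 one_ne_zero).comp
      (tendsto_atTop_add_const_right _ 1 tendsto_natCast_atTop_atTop)).div_const (Real.log 2)
    simpa [Function.comp_def, Real.logb, div_div_eq_mul_div, div_right_comm _ (Real.log 2)]
      using this
  refine tendsto_of_tendsto_of_tendsto_of_le_of_le tendsto_const_nhds hlog
    (fun n => by positivity) (fun n => div_le_div_of_nonneg_right ?_ n.cast_nonneg)
  exact_mod_cast Real.natLog_le_logb (n + 1) 2

lemma densityZero_setOf_log_two_ne :
    DensityZero {i | Nat.log 2 (i + 2) ≠ Nat.log 2 (i + 1)} :=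
  .of_cnt_le cnt_setOf_log_two_ne_le tendsto_natLog_two_succ_div

lemma half_le_avg_of_forall_log_two_eq {a : ℕ → ℝ} (ha : ∀ i, 0 ≤ a i) {c : ℝ} (hc : 0 ≤ c)
    {m : ℕ} (hm : ∀ i, Nat.log 2 (i + 1) = m → c ≤ a i) :
    c / 2 ≤ (∑ i ∈ range (2 ^ (m + 1) - 1), a i) / (2 ^ (m + 1) - 1 : ℕ) := by
  have hblock : (2 : ℝ) ^ m * c ≤ ∑ i ∈ range (2 ^ (m + 1) - 1), a i :=
    calc (2 : ℝ) ^ m * c = ∑ _i ∈ Ico (2 ^ m - 1) (2 ^ (m + 1) - 1), c := by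
          rw [sum_const, Nat.card_Ico, show 2 ^ (m + 1) - 1 - (2 ^ m - 1) = 2 ^ m by
            rw [pow_succ]; omega, nsmul_eq_mul, Nat.cast_pow, Nat.cast_ofNat]
      _ ≤ ∑ i ∈ Ico (2 ^ m - 1) (2 ^ (m + 1) - 1), a i := by
          refine sum_le_sum fun i hi => hm i (Nat.log_eq_of_pow_le_of_lt_pow ?_ ?_) <;>
            rw [mem_Ico] at hi <;> omega
      _ ≤ ∑ i ∈ range (2 ^ (m + 1) - 1), a i :=
          sum_le_sum_of_subset_of_nonneg (fun i hi => mem_range.2 (mem_Ico.1 hi).2)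
            fun i _ _ => ha i
  have hlen : ((2 ^ (m + 1) - 1 : ℕ) : ℝ) ≤ 2 * 2 ^ m := by
    rw [← pow_succ']; exact_mod_cast Nat.sub_le _ _
  have hpos : (0 : ℝ) < (2 ^ (m + 1) - 1 : ℕ) := by
    have : 1 < 2 ^ (m + 1) := Nat.one_lt_two_pow (by omega)
    exact_mod_cast Nat.sub_pos_of_lt this
  rw [div_le_div_iff₀ two_pos hpos]
  nlinarith

lemma isBoundedUnder_le_avg {a : ℕ → ℝ} {C : ℝ} (ha : ∀ i, 0 ≤ a i) (hC : ∀ i, a i ≤ C) :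
    IsBoundedUnder (· ≤ ·) atTop (fun n : ℕ => (∑ i ∈ range n, a i) / n) := by
  refine isBoundedUnder_of ⟨C, fun n => ?_⟩
  rcases n.eq_zero_or_pos with rfl | hn
  · simpa using (ha 0).trans (hC 0)
  · rw [div_le_iff₀ (by exact_mod_cast hn), mul_comm]
    simpa using sum_le_sum fun i (_ : i ∈ range n) => hC i

lemma half_le_limsup_avg {a : ℕ → ℝ} (ha : ∀ i, 0 ≤ a i)
    (hbdd : IsBoundedUnder (· ≤ ·) atTop (fun n : ℕ => (∑ i ∈ range n, a i) / n))
    {c : ℝ} (hc : 0 ≤ c) (hfreq : ∃ᶠ m in atTop, ∀ i, Nat.log 2 (i + 1) = m → c ≤ a i) :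
    c / 2 ≤ limsup (fun n : ℕ => (∑ i ∈ range n, a i) / n) atTop := by
  have hlen : Tendsto (fun m : ℕ => 2 ^ (m + 1) - 1) atTop atTop :=
    tendsto_atTop_mono (fun m => by have := Nat.lt_two_pow_self (n := m + 1); simp only [id]; omega)
      tendsto_id
  exact le_limsup_of_frequently_le
    (hlen.frequently (hfreq.mono fun m hm => half_le_avg_of_forall_log_two_eq ha hc hm)) hbdd

def switchedOrbit (f : X → X) (x y : X) (i : ℕ) : X :=
  if Even (Nat.log 2 (i + 1)) then f^[i] x else f^[i] y

lemma switchedOrbit_succ {f : X → X} {x y : X} {i : ℕ}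
    (hi : Nat.log 2 (i + 2) = Nat.log 2 (i + 1)) :
    f (switchedOrbit f x y i) = switchedOrbit f x y (i + 1) := by
  unfold switchedOrbit
  rw [show i + 1 + 1 = i + 2 from rfl, hi]
  split_ifs <;> exact (Function.iterate_succ_apply' f i _).symm

lemma ergodicPseudoOrbit_switchedOrbit [MetricSpace X] {f : X → X} {δ : ℝ} (hδ : 0 < δ)
    (x y : X) : ErgodicPseudoOrbit f δ (switchedOrbit f x y) := by
  refine densityZero_setOf_log_two_ne.subset ?_
  intro i (hi : δ ≤ dist _ _) hlog
  rw [switchedOrbit_succ (f := f) hlog, dist_self] at hi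
  exact hi.not_gt hδ

lemma Isometry.iterate [PseudoEMetricSpace X] {f : X → X} (hf : Isometry f) (n : ℕ) :
    Isometry f^[n] := by
  induction n with
  | zero => exact isometry_id
  | succ n ih => exact ih.comp hf

lemma Isometry.dist_iterate_switchedOrbit [MetricSpace X] {f : X → X} (hf : Isometry f)
    (p x y : X) (i : ℕ) :
    dist (f^[i] p) (switchedOrbit f x y i) =
      if Even (Nat.log 2 (i + 1)) then dist p x else dist p y := by
  unfold switchedOrbit
  split_ifs <;> exact (hf.iterate i).dist_eq _ _

theorem Isometry.not_meanErgodicShadowingAvg [MetricSpace X] {f : X → X} (hf : Isometry f)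
    {x y : X} (hxy : x ≠ y) : ¬ MeanErgodicShadowingAvg f := by
  intro h
  obtain ⟨δ, hδ, hshadow⟩ := h (dist x y / 4) (div_pos (dist_pos.2 hxy) four_pos)
  obtain ⟨p, hp⟩ := hshadow _ (ergodicPseudoOrbit_switchedOrbit hδ x y)
  have hdist := hf.dist_iterate_switchedOrbit p x y
  have ha : ∀ i, 0 ≤ dist (f^[i] p) (switchedOrbit f x y i) := fun i => dist_nonneg
  have hbdd := isBoundedUnder_le_avg ha (C := max (dist p x) (dist p y)) fun i => by
    rw [hdist]; split_ifs <;> simp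
  have hx := half_le_limsup_avg ha hbdd (c := dist p x) dist_nonneg <|
    Nat.frequently_even.mono fun m hm i hi => by rw [hdist, hi, if_pos hm]
  have hy := half_le_limsup_avg ha hbdd (c := dist p y) dist_nonneg <|
    Nat.frequently_odd.mono fun m hm i hi => by rw [hdist, hi, if_neg (Nat.not_even_iff_odd.2 hm)]
  have := dist_triangle_left x y p
  unfold AvgShadows at hp
  linarith

lemma unitInterval.isometry_symm : Isometry unitInterval.symm :=
  Isometry.of_dist_eq fun s t => by
    simp only [Subtype.dist_eq, Real.dist_eq, unitInterval.coe_symm_eq]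
    rw [sub_sub_sub_cancel_left, abs_sub_comm]

theorem stmt4 : ¬ MeanErgodicShadowingAvg (unitInterval.symm) :=
  unitInterval.isometry_symm.not_meanErgodicShadowingAvg zero_ne_one
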